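/- Density in a weighted space plus p-integrability of the weight implies L^p density: let X be a Polish space with finite Borel measure ν, ψ : X → (0,∞) measurable with ∫_X ψ^p dν < ∞ (p > 1), and let 𝒜 be a set of measurable functions such that for every continuous bounded f : X → ℝ and every δ > 0 there exists a ∈ 𝒜 with sup_{x∈X} |f(x) - a(x)|/ψ(x) < δ. Then for every f ∈ L^p(X, ν) and ε > 0 there exists a ∈ 𝒜 with ‖f - a‖_{L^p(X,ν)} < ε. -/

import Mathlib

/-!
Approximate `f` in `L^p` within `ε / 2` by a bounded continuous `g` (Lusin–Tietze; a finite measure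
on a metrizable space is weakly regular), then pick `a ∈ 𝒜` with `|g - a| < δ ψ`, so that
`‖g - a‖_p ≤ δ ‖ψ‖_p < ε / 2`, and conclude by Minkowski's inequality.
-/

open MeasureTheory
open scoped ENNReal NNReal BoundedContinuousFunction

namespace MeasureTheory

variable {α : Type*} [MeasurableSpace α] {μ : Measure α}

lemma eLpNorm_ofReal_lt_top_of_lintegral_rpow_ne_top {ψ : α → ℝ} (hψ : ∀ x, 0 ≤ ψ x) {p : ℝ}
    (hp : 0 < p) (h : ∫⁻ x, ENNReal.ofReal (ψ x ^ p) ∂μ ≠ ∞) :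
    eLpNorm ψ (ENNReal.ofReal p) μ < ∞ := by
  rw [eLpNorm_eq_lintegral_rpow_enorm_toReal (by simpa using hp) ENNReal.ofReal_ne_top,
    ENNReal.toReal_ofReal hp.le]
  have hrpow : ∀ x, ‖ψ x‖ₑ ^ p = ENNReal.ofReal (ψ x ^ p) := fun x => by
    rw [Real.enorm_eq_ofReal (hψ x), ENNReal.ofReal_rpow_of_nonneg (hψ x) hp.le]
  simp only [hrpow]
  exact ENNReal.rpow_lt_top_of_nonneg (by positivity) h

variable [TopologicalSpace α] [NormalSpace α] [BorelSpace α] [μ.WeaklyRegular]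

theorem MemLp.exists_mem_eLpNorm_sub_lt_of_weighted_dense {p : ℝ≥0∞} (hp1 : 1 ≤ p) (hp : p ≠ ∞)
    {ψ : α → ℝ} (hψ : eLpNorm ψ p μ ≠ ∞) {𝒜 : Set (α → ℝ)}
    (h𝒜 : ∀ a ∈ 𝒜, AEStronglyMeasurable a μ)
    (hdense : ∀ g : α →ᵇ ℝ, ∀ δ > (0 : ℝ), ∃ a ∈ 𝒜, ∀ x, |g x - a x| < δ * ψ x)
    {f : α → ℝ} (hf : MemLp f p μ) {ε : ℝ≥0∞} (hε : ε ≠ 0) :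
    ∃ a ∈ 𝒜, eLpNorm (f - a) p μ < ε := by
  obtain ⟨g, hfg, hg⟩ := hf.exists_boundedContinuous_eLpNorm_sub_le hp (ENNReal.half_pos hε).ne'
  obtain ⟨δ, hδ, hδψ⟩ := ENNReal.exists_nnreal_pos_mul_lt hψ (ENNReal.half_pos hε).ne'
  obtain ⟨a, ha𝒜, hga⟩ := hdense g δ hδ
  refine ⟨a, ha𝒜, ?_⟩
  have hga_le : ∀ x, ‖g x - a x‖ ≤ δ * ‖ψ x‖ := fun x =>
    (hga x).le.trans (mul_le_mul_of_nonneg_left (le_abs_self _) δ.2)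
  have hga_lt : eLpNorm (⇑g - a) p μ < ε / 2 := calc
    eLpNorm (⇑g - a) p μ ≤ ENNReal.ofReal δ * eLpNorm ψ p μ :=
      eLpNorm_le_mul_eLpNorm_of_ae_le_mul (ae_of_all _ hga_le) p
    _ < ε / 2 := by rwa [ENNReal.ofReal_coe_nnreal]
  calc eLpNorm (f - a) p μ = eLpNorm ((f - ⇑g) + (⇑g - a)) p μ := by rw [sub_add_sub_cancel]
    _ ≤ eLpNorm (f - ⇑g) p μ + eLpNorm (⇑g - a) p μ :=
      eLpNorm_add_le (hf.1.sub hg.1) (hg.1.sub (h𝒜 a ha𝒜)) hp1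
    _ < ε / 2 + ε / 2 :=
      ENNReal.add_lt_add_of_le_of_lt (hf.sub hg).eLpNorm_ne_top hfg hga_lt
    _ = ε := ENNReal.add_halves ε

end MeasureTheory

theorem stmt_11_general {X : Type*} [TopologicalSpace X] [PolishSpace X]
    [MeasurableSpace X] [BorelSpace X]
    (ν : Measure X) [IsFiniteMeasure ν]
    (ψ : X → ℝ) (hψpos : ∀ x, 0 < ψ x)
    (p : ℝ) (hp : 1 < p)
    (hψint : ∫⁻ x, ENNReal.ofReal (ψ x ^ p) ∂ν ≠ ⊤)
    (𝒜 : Set (X → ℝ)) (h𝒜meas : ∀ a ∈ 𝒜, Measurable a)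
    (hdense : ∀ f : X → ℝ, Continuous f → (∃ C : ℝ, ∀ x, |f x| ≤ C) →
      ∀ δ > (0:ℝ), ∃ a ∈ 𝒜, ∀ x, |f x - a x| < δ * ψ x) :
    ∀ f : X → ℝ, MemLp f (ENNReal.ofReal p) ν → ∀ ε > (0:ℝ),
      ∃ a ∈ 𝒜, eLpNorm (fun x => f x - a x) (ENNReal.ofReal p) ν
        < ENNReal.ofReal ε := by
  intro f hf ε hε
  have hψLp : eLpNorm ψ (ENNReal.ofReal p) ν < ∞ :=
    eLpNorm_ofReal_lt_top_of_lintegral_rpow_ne_top (fun x => (hψpos x).le) (one_pos.trans hp)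
      hψint
  have hdense' : ∀ g : X →ᵇ ℝ, ∀ δ > (0 : ℝ), ∃ a ∈ 𝒜, ∀ x, |g x - a x| < δ * ψ x :=
    fun g => hdense g g.continuous ⟨‖g‖, fun x => by simpa using g.norm_coe_le_norm x⟩
  exact hf.exists_mem_eLpNorm_sub_lt_of_weighted_dense (by simpa using hp.le)
    ENNReal.ofReal_ne_top hψLp.ne (fun a ha => (h𝒜meas a ha).aestronglyMeasurable) hdense'
    (by simpa using hε)

theorem stmt_11 {X : Type*} [TopologicalSpace X] [PolishSpace X]
    [MeasurableSpace X] [BorelSpace X]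
    (ν : Measure X) [IsFiniteMeasure ν]
    (ψ : X → ℝ) (hψmeas : Measurable ψ) (hψpos : ∀ x, 0 < ψ x)
    (p : ℝ) (hp : 1 < p)
    (hψint : ∫⁻ x, ENNReal.ofReal (ψ x ^ p) ∂ν ≠ ⊤)
    (𝒜 : Set (X → ℝ)) (h𝒜meas : ∀ a ∈ 𝒜, Measurable a)
    (hdense : ∀ f : X → ℝ, Continuous f → (∃ C : ℝ, ∀ x, |f x| ≤ C) →
      ∀ δ > (0:ℝ), ∃ a ∈ 𝒜, ∀ x, |f x - a x| < δ * ψ x) :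
    ∀ f : X → ℝ, MemLp f (ENNReal.ofReal p) ν → ∀ ε > (0:ℝ),
      ∃ a ∈ 𝒜, eLpNorm (fun x => f x - a x) (ENNReal.ofReal p) ν
        < ENNReal.ofReal ε :=
  stmt_11_general ν ψ hψpos p hp hψint 𝒜 h𝒜meas hdense
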